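/- arXiv:2310.04190 — 5 statements merged into one kernel-verified Lean document; each statement's English description precedes it below -/
import Mathlib

section
/- For every graph G with vertex labeling μ, every i ≥ 0 and all vertices u, v of G, the Weisfeiler–Leman colors satisfy c^(i)(u) = c^(i)(v) if and only if the unfolding trees F_i^u and F_i^v are isomorphic as rooted labeled trees. -/
open scoped Classical

universe u v

/-- A rooted labeled (unordered) tree: a root label together with a list of
child subtrees.  The list order is irrelevant for the isomorphism relation. -/
inductive LTree (L : Type u) : Type u
  | node : L → List (LTree L) → LTree L

namespace LTree

variable {L : Type u} {L' C : Type v}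

/-- The label of the root. -/
def label : LTree L → L
  | node a _ => a

/-- The child subtrees of the root. -/
def children : LTree L → List (LTree L)
  | node _ ts => ts

/-- Isomorphism of rooted labeled trees: there is a bijection between the node
sets preserving the root, the parent–child relation and node labels; for our
representation this means equal root labels and children that correspond, up to
a permutation, to pairwise isomorphic subtrees. -/
inductive Iso : LTree L → LTree L → Prop
  | node (a : L) {ts us vs : List (LTree L)} :
      List.Forall₂ Iso ts vs → vs.Perm us → Iso (node a ts) (node a us)

/-- `Embeds t s` : `t` is an induced rooted subtree of `s`, i.e. the nodes of
`t` inject into the nodes of `s` preserving the root, labels and the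
parent–child relation. -/
inductive Embeds : LTree L → LTree L → Prop
  | node (a : L) {ts us vs : List (LTree L)} :
      List.Forall₂ Embeds ts vs → vs.Subperm us → Embeds (node a ts) (node a us)

/-- Number of nodes of a rooted tree. -/
def size : LTree L → ℕ
  | node _ ts => 1 + (ts.attach.map (fun c => size c.1)).sum
decreasing_by simp_wf; have := List.sizeOf_lt_of_mem c.2; omega

/-- Relabel a tree by `f`. -/
def map (f : L → L') : LTree L → LTree L'
  | node a ts => node (f a) (ts.attach.map (fun c => map f c.1))
decreasing_by simp_wf; have := List.sizeOf_lt_of_mem c.2; omega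

/-- Number of nodes of the tree carrying label `x`. -/
def countLabel [DecidableEq L] (x : L) : LTree L → ℕ
  | node a ts => (if a = x then 1 else 0) + (ts.attach.map (fun c => countLabel x c.1)).sum
decreasing_by simp_wf; have := List.sizeOf_lt_of_mem c.2; omega

/-- Number of nodes at depth `d` carrying label `x`. -/
def countAt [DecidableEq L] (x : L) : ℕ → LTree L → ℕ
  | 0, node a _ => if a = x then 1 else 0
  | d+1, node _ ts => (ts.attach.map (fun c => countAt x d c.1)).sum
termination_by _ t => sizeOf t
decreasing_by simp_wf; have := List.sizeOf_lt_of_mem c.2; omega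

/-- `SubtreeAt t d s` : `s` is the subtree of `t` rooted at one of the nodes of
`t` at depth `d`. -/
inductive SubtreeAt : LTree L → ℕ → LTree L → Prop
  | refl (t : LTree L) : SubtreeAt t 0 t
  | step {t c s : LTree L} {d : ℕ} : c ∈ t.children → SubtreeAt c d s → SubtreeAt t (d+1) s

/-- The AHU canonical value: `ahu f t = f (label t) {{ ahu f c | c child of t }}`,
computed bottom-up (a leaf gets `f (label) ∅`). -/
noncomputable def ahu (f : L → Multiset C → C) : LTree L → C
  | node a ts => f a (↑(ts.attach.map (fun c => ahu f c.1)) : Multiset C)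
decreasing_by simp_wf; have := List.sizeOf_lt_of_mem c.2; omega

end LTree

section Graph

variable {V : Type u} {X : Type v}

/-- The unfolding tree `F_i^v` of height `i` of the vertex `v`, with node labels
given by `μ` (a node representing the graph vertex `x` is labeled `μ x`). -/
noncomputable def SimpleGraph.unfoldingTree (G : SimpleGraph V) [Fintype V] (μ : V → X) :
    ℕ → V → LTree X
  | 0, u => .node (μ u) []
  | i+1, u => .node (μ u) ((G.neighborFinset u).toList.map (G.unfoldingTree μ i))

/-- Auxiliary recursion for `k`-redundant neighborhood trees: `r` is the root
vertex, `d` is the current depth and `x` the currently represented vertex.  A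
neighbor `y` is kept at depth `d + 1` iff `d + 1 ≤ dist r y + k`; since the
minimal depth at which `y` occurs in the unfolding tree rooted at `r` is
`dist r y`, this is exactly the pruning condition
`depth(u) ≤ depth(w) + k` for all nodes `w` with `φ(u) = φ(w)`. -/
noncomputable def SimpleGraph.ntAux (G : SimpleGraph V) [Fintype V] (μ : V → X)
    (r : V) (k : ℕ) : ℕ → ℕ → V → LTree X
  | 0, _, x => .node (μ x) []
  | i+1, d, x => .node (μ x)
      (((G.neighborFinset x).filter (fun y => d + 1 ≤ G.dist r y + k)).toList.map
        (G.ntAux μ r k i (d+1)))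

/-- The `k`-redundant neighborhood tree `T_{i,k}^v` of height `i` of vertex `v`. -/
noncomputable def SimpleGraph.ntTree (G : SimpleGraph V) [Fintype V] (μ : V → X)
    (i k : ℕ) (v : V) : LTree X :=
  G.ntAux μ v k i 0 v

end Graph

/-- The 1-dimensional Weisfeiler–Leman coloring:
`c⁰ v = μ v` and `cⁱ⁺¹ v = h (cⁱ v) {{ cⁱ u | u ∈ N(v) }}`. -/
noncomputable def SimpleGraph.wlColoring {V : Type u} {C : Type v} (G : SimpleGraph V)
    [Fintype V] (μ : V → C) (h : C → Multiset C → C) : ℕ → V → C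
  | 0, u => μ u
  | i+1, u => h (G.wlColoring μ h i u) ((G.neighborFinset u).val.map (G.wlColoring μ h i))


namespace LTree

variable {L : Type u}

theorem rel_coe_of_forall₂ {α : Type*} {r : α → α → Prop} :
    ∀ {l₁ l₂ : List α}, List.Forall₂ r l₁ l₂ → Multiset.Rel r ↑l₁ ↑l₂
  | _, _, List.Forall₂.nil => Multiset.Rel.zero
  | _, _, List.Forall₂.cons h hs => by
      simpa using Multiset.Rel.cons h (rel_coe_of_forall₂ hs)

theorem rel_coe_iff {α : Type*} {r : α → α → Prop} {l₁ l₂ : List α} :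
    Multiset.Rel r ↑l₁ ↑l₂ ↔ ∃ l, List.Forall₂ r l₁ l ∧ l.Perm l₂ := by
  constructor
  · intro hrel
    have key : ∀ {s t : Multiset α}, Multiset.Rel r s t →
        ∀ (l₁ l₂ : List α), (l₁ : Multiset α) = s →
          (l₂ : Multiset α) = t → ∃ l, List.Forall₂ r l₁ l ∧ l.Perm l₂ := by
      intro s t hst
      induction hst with
      | zero =>
        intro l₁ l₂ h1 h2
        rw [Multiset.coe_eq_zero] at h1 h2
        subst h1; subst h2
        exact ⟨[], List.Forall₂.nil, List.Perm.nil⟩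
      | @cons a b as bs hab _ ih =>
        intro l₁ l₂ h1 h2
        obtain ⟨la, hla⟩ := as.exists_rep
        obtain ⟨lb, hlb⟩ := bs.exists_rep
        have ha : (l₁ : Multiset α) = ((a :: la : List α) : Multiset _) := by
          rw [h1, ← hla]; rfl
        have hb : (l₂ : Multiset α) = ((b :: lb : List α) : Multiset _) := by
          rw [h2, ← hlb]; rfl
        rw [Multiset.coe_eq_coe] at ha hb
        obtain ⟨l, hf, hp⟩ := ih la lb hla hlb
        have hf' : List.Forall₂ r (a :: la) (b :: l) := List.Forall₂.cons hab hf
        obtain ⟨l', hf'', hp'⟩ := List.perm_comp_forall₂ ha hf'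
        exact ⟨l', hf'', hp'.trans ((hp.cons b).trans hb.symm)⟩
    exact key hrel l₁ l₂ rfl rfl
  · rintro ⟨l, hf, hp⟩
    have := rel_coe_of_forall₂ hf
    rwa [(Multiset.coe_eq_coe).2 hp] at this

theorem Iso.label_eq : ∀ {t s : LTree L}, Iso t s → t.label = s.label := by
  rintro _ _ ⟨⟩; rfl

theorem iso_node_iff {a b : L} {ts us : List (LTree L)} :
    Iso (node a ts) (node b us) ↔ a = b ∧ Multiset.Rel Iso (↑ts : Multiset (LTree L)) (↑us : Multiset (LTree L)) := by
  constructor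
  · rintro ⟨_, hf, hp⟩
    exact ⟨rfl, rel_coe_iff.2 ⟨_, hf, hp⟩⟩
  · rintro ⟨rfl, hrel⟩
    obtain ⟨l, hf, hp⟩ := rel_coe_iff.1 hrel
    exact Iso.node a hf hp

end LTree

section WLProof

variable {V : Type u} {C : Type v} [Fintype V]

theorem wl_pred_eq (G : SimpleGraph V) (μ : V → C) (h : C → Multiset C → C)
    (hinj : ∀ a s b t, h a s = h b t → a = b ∧ s = t) (i : ℕ) {u v : V}
    (he : G.wlColoring μ h (i+1) u = G.wlColoring μ h (i+1) v) :
    G.wlColoring μ h i u = G.wlColoring μ h i v :=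
  (hinj _ _ _ _ he).1

theorem wl_of_rel (G : SimpleGraph V) (μ : V → C) (h : C → Multiset C → C)
    (hinj : ∀ a s b t, h a s = h b t → a = b ∧ s = t) :
    ∀ (i : ℕ) (u v : V), μ u = μ v →
      Multiset.Rel (fun a b => G.wlColoring μ h i a = G.wlColoring μ h i b)
        (G.neighborFinset u).val (G.neighborFinset v).val →
      G.wlColoring μ h i u = G.wlColoring μ h i v
  | 0, u, v, hμ, _ => hμ
  | i+1, u, v, hμ, hrel => by
    have hrel' : Multiset.Rel (fun a b => G.wlColoring μ h i a = G.wlColoring μ h i b)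
        (G.neighborFinset u).val (G.neighborFinset v).val :=
      hrel.mono (fun a _ b _ hab => wl_pred_eq G μ h hinj i hab)
    have h1 : G.wlColoring μ h i u = G.wlColoring μ h i v :=
      wl_of_rel G μ h hinj i u v hμ hrel'
    have h2 : (G.neighborFinset u).val.map (G.wlColoring μ h i) =
        (G.neighborFinset v).val.map (G.wlColoring μ h i) :=
      Multiset.rel_eq.1 (Multiset.rel_map.2 hrel')
    show h _ _ = h _ _
    rw [h1, h2]

theorem unfoldingTree_label (G : SimpleGraph V) (μ : V → C) :
    ∀ (i : ℕ) (u : V), (G.unfoldingTree μ i u).label = μ u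
  | 0, u => rfl
  | i+1, u => rfl

end WLProof

/-- For every graph `G` with vertex labeling `μ`, every `i ≥ 0`
and all vertices `u, v`, the Weisfeiler–Leman colors satisfy
`c⁽ⁱ⁾(u) = c⁽ⁱ⁾(v)` iff the unfolding trees `F_i^u` and `F_i^v` are isomorphic
as rooted labeled trees. -/
theorem wlColoring_eq_iff_unfoldingTree_iso {V : Type u} {C : Type v} [Fintype V]
    (G : SimpleGraph V) (μ : V → C) (h : C → Multiset C → C)
    (hinj : ∀ a s b t, h a s = h b t → a = b ∧ s = t)
    (i : ℕ) (u v : V) :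
    G.wlColoring μ h i u = G.wlColoring μ h i v ↔
      LTree.Iso (G.unfoldingTree μ i u) (G.unfoldingTree μ i v) := by
    induction i generalizing u v with
  | zero =>
    show μ u = μ v ↔ LTree.Iso (.node (μ u) []) (.node (μ v) [])
    rw [LTree.iso_node_iff]
    exact ⟨fun hμ => ⟨hμ, by simp [Multiset.Rel.zero]⟩, fun ⟨hμ, _⟩ => hμ⟩
  | succ i ih =>
    have hcoe : ∀ w : V, ((((G.neighborFinset w).toList.map (G.unfoldingTree μ i)) :
        List (LTree C)) : Multiset (LTree C)) =
        Multiset.map (G.unfoldingTree μ i) (G.neighborFinset w).val := by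
      intro w
      rw [← Multiset.map_coe, Finset.coe_toList]
    have hrels : ∀ w w' : V,
        (Multiset.Rel (fun a b => G.wlColoring μ h i a = G.wlColoring μ h i b)
          (G.neighborFinset w).val (G.neighborFinset w').val ↔
        Multiset.Rel LTree.Iso
          (Multiset.map (G.unfoldingTree μ i) (G.neighborFinset w).val)
          (Multiset.map (G.unfoldingTree μ i) (G.neighborFinset w').val)) := by
      intro w w'
      rw [Multiset.rel_map]
      constructor
      · exact fun hr => hr.mono (fun a _ b _ hab => (ih a b).1 hab)
      · exact fun hr => hr.mono (fun a _ b _ hab => (ih a b).2 hab)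
    constructor
    · intro heq
      obtain ⟨h1, h2⟩ := hinj _ _ _ _ heq
      have hrel : Multiset.Rel (fun a b => G.wlColoring μ h i a = G.wlColoring μ h i b)
          (G.neighborFinset u).val (G.neighborFinset v).val := by
        rw [← Multiset.rel_eq] at h2
        exact Multiset.rel_map.1 h2
      have hμ : μ u = μ v := by
        have hl := ((ih u v).1 h1).label_eq
        rwa [unfoldingTree_label G μ i u, unfoldingTree_label G μ i v] at hl
      show LTree.Iso (.node (μ u) _) (.node (μ v) _)
      rw [LTree.iso_node_iff, hcoe, hcoe]
      exact ⟨hμ, (hrels u v).1 hrel⟩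
    · intro hiso
      have hiso' := hiso
      rw [show G.unfoldingTree μ (i+1) u = .node (μ u)
            ((G.neighborFinset u).toList.map (G.unfoldingTree μ i)) from rfl,
          show G.unfoldingTree μ (i+1) v = .node (μ v)
            ((G.neighborFinset v).toList.map (G.unfoldingTree μ i)) from rfl,
          LTree.iso_node_iff, hcoe, hcoe] at hiso'
      obtain ⟨hμ, hrel⟩ := hiso'
      have hrel' := (hrels u v).2 hrel
      have h1 : G.wlColoring μ h i u = G.wlColoring μ h i v :=
        wl_of_rel G μ h hinj i u v hμ hrel'
      have h2 : (G.neighborFinset u).val.map (G.wlColoring μ h i) =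
          (G.neighborFinset v).val.map (G.wlColoring μ h i) :=
        Multiset.rel_eq.1 (Multiset.rel_map.2 hrel')
      show h _ _ = h _ _
      rw [h1, h2]
end

section
/- For every graph G with n vertices and m edges, every vertex v, and all i, k ≥ 0, there exists a directed acyclic graph D with a distinguished node r such that the unfolding of r in D is isomorphic to the k-redundant neighborhood tree T_{i,k}^v, and D has at most n·(k+1) nodes and at most 2m·(k+1) edges; i.e., a single k-NT admits a linear-size DAG representation of size O(m·(k+1)). -/
open scoped Classical

universe u v

/-- A labeled DAG: finitely many nodes, each with a label and a list of children
(parallel edges are allowed), together with a rank function witnessing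
acyclicity (children have strictly smaller rank). -/
structure LDag (L : Type u) where
  size : ℕ
  label : Fin size → L
  children : Fin size → List (Fin size)
  rank : Fin size → ℕ
  rank_lt : ∀ {i j}, j ∈ children i → rank j < rank i

namespace LDag

variable {L : Type u}

/-- The unfolding of a node of a DAG into a rooted labeled tree, obtained by
recursively expanding the node and its children. -/
def unfold (D : LDag L) (p : Fin D.size) : LTree L :=
  .node (D.label p) ((D.children p).attach.map (fun q => D.unfold q.1))
termination_by D.rank p
decreasing_by exact D.rank_lt q.2

/-- Total number of edges of the DAG (counted with multiplicity). -/
def edgeCount (D : LDag L) : ℕ := ∑ p : Fin D.size, (D.children p).length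

end LDag

/-!
The subtree of `T_{i,k}^v` below a copy of the vertex `x` at depth `d` is `ntAux (i - d) d x`: it
depends only on the pair `(x, d)`, so all such copies can be shared in one DAG node. Such a copy
exists only if `dist v x ≤ d ≤ dist v x + k`, which leaves at most `k + 1` nodes per vertex, and
the node `(x, d)` has at most `deg x` children.
-/

theorem LTree.Iso.refl {L : Type u} : ∀ t : LTree L, t.Iso t
  | .node a ts => .node a (List.forall₂_same.mpr fun c _ => Iso.refl c) (.refl ts)
decreasing_by simp_wf; have := List.sizeOf_lt_of_mem ‹c ∈ ts›; omega

namespace LDag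

variable {α : Type*} {L : Type u} (S : Finset α) (label : α → L) (children : α → List α)
  (rank : α → ℕ) (children_mem : ∀ a ∈ S, ∀ b ∈ children a, b ∈ S)
  (rank_lt : ∀ a ∈ S, ∀ b ∈ children a, rank b < rank a)

noncomputable def ofFinset : LDag L where
  size := S.card
  label p := label (S.equivFin.symm p)
  children p := (children (S.equivFin.symm p)).attach.map fun b =>
    S.equivFin ⟨b.1, children_mem _ (S.equivFin.symm p).2 _ b.2⟩
  rank p := rank (S.equivFin.symm p)
  rank_lt := by
    intro p q hq
    obtain ⟨b, -, rfl⟩ := List.mem_map.mp hq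
    simpa using rank_lt _ (S.equivFin.symm p).2 _ b.2

theorem unfold_ofFinset (t : α → LTree L)
    (ht : ∀ a ∈ S, t a = .node (label a) ((children a).map t))
    (p : Fin (ofFinset S label children rank children_mem rank_lt).size) :
    (ofFinset S label children rank children_mem rank_lt).unfold p = t (S.equivFin.symm p) := by
  induction h : rank (S.equivFin.symm p) using Nat.strong_induction_on generalizing p with
  | _ n ih =>
    rw [LDag.unfold, ht _ (S.equivFin.symm p).2, List.attach_map_val, ← List.attach_map_val (l := children _)]
    congr 1
    refine (List.map_map ..).trans (List.map_congr_left fun b _ => ?_)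
    have hb := children_mem _ (S.equivFin.symm p).2 _ b.2
    have := ih _ (h ▸ rank_lt _ (S.equivFin.symm p).2 _ b.2) (S.equivFin ⟨b, hb⟩) (by simp)
    rwa [Equiv.symm_apply_apply] at this

theorem edgeCount_ofFinset :
    (ofFinset S label children rank children_mem rank_lt).edgeCount =
      ∑ a ∈ S, (children a).length := by
  rw [← Finset.sum_coe_sort S, ← S.equivFin.symm.sum_comp]
  simp only [edgeCount, ofFinset, List.length_map, List.length_attach]
  rfl

end LDag

theorem Finset.sum_fst_le_of_snd_mem_Icc {V : Type*} [Fintype V] (S : Finset (V × ℕ))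
    (lo : V → ℕ) (k : ℕ) (hS : ∀ p ∈ S, p.2 ∈ Set.Icc (lo p.1) (lo p.1 + k)) (f : V → ℕ) :
    ∑ p ∈ S, f p.1 ≤ (k + 1) * ∑ x, f x := by
  let φ : V × ℕ → V × ℕ := fun p => (p.1, p.2 - lo p.1)
  have hφ : Set.InjOn φ S := by
    rintro ⟨x, d⟩ hp ⟨y, e⟩ hq h
    obtain ⟨rfl, h⟩ := Prod.mk.inj h
    have := hS _ hp
    have := hS _ hq
    simp only [Set.mem_Icc] at *
    simp only [Prod.mk.injEq, true_and]
    omega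
  have hφS : S.image φ ⊆ Finset.univ ×ˢ Finset.range (k + 1) := by
    intro q hq
    obtain ⟨p, hp, rfl⟩ := Finset.mem_image.mp hq
    have := hS p hp
    simp only [Set.mem_Icc] at this
    simp only [φ, Finset.mem_product, Finset.mem_univ, Finset.mem_range, true_and]
    omega
  calc ∑ p ∈ S, f p.1 = ∑ q ∈ S.image φ, f q.1 := (Finset.sum_image (f := fun q => f q.1) hφ).symm
    _ ≤ ∑ q ∈ Finset.univ ×ˢ Finset.range (k + 1), f q.1 := Finset.sum_le_sum_of_subset hφS
    _ = (k + 1) * ∑ x, f x := by simp [Finset.sum_product, Finset.mul_sum]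

namespace SimpleGraph

variable {V : Type u} {X : Type v} (G : SimpleGraph V) [Fintype V] (μ : V → X) (v : V) (i k : ℕ)

noncomputable def ntDagNodes : Finset (V × ℕ) :=
  (Finset.univ ×ˢ Finset.range (i + 1)).filter
    fun p => G.dist v p.1 ≤ p.2 ∧ p.2 ≤ G.dist v p.1 + k

noncomputable def ntDagChildren (p : V × ℕ) : List (V × ℕ) :=
  if p.2 < i then
    ((G.neighborFinset p.1).filter fun y => p.2 + 1 ≤ G.dist v y + k).toList.map (·, p.2 + 1)
  else []

variable {G v i k}

theorem mem_ntDagNodes {p : V × ℕ} :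
    p ∈ G.ntDagNodes v i k ↔ p.2 ≤ i ∧ G.dist v p.1 ≤ p.2 ∧ p.2 ≤ G.dist v p.1 + k := by
  simp [ntDagNodes]

theorem snd_mem_Icc_of_mem_ntDagNodes {p : V × ℕ} (hp : p ∈ G.ntDagNodes v i k) :
    p.2 ∈ Set.Icc (G.dist v p.1) (G.dist v p.1 + k) :=
  (mem_ntDagNodes.mp hp).2

theorem mem_ntDagChildren {p q : V × ℕ} :
    q ∈ G.ntDagChildren v i k p ↔
      p.2 < i ∧ G.Adj p.1 q.1 ∧ q.2 = p.2 + 1 ∧ p.2 + 1 ≤ G.dist v q.1 + k := by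
  unfold ntDagChildren
  split_ifs with h
  · simp only [h, true_and, List.mem_map, Finset.mem_toList, Finset.mem_filter,
      mem_neighborFinset]
    constructor
    · rintro ⟨y, ⟨hadj, hk⟩, rfl⟩
      exact ⟨hadj, rfl, hk⟩
    · rintro ⟨hadj, hq, hk⟩
      exact ⟨q.1, ⟨hadj, hk⟩, Prod.ext rfl hq.symm⟩
  · simp [h]

theorem mem_ntDagNodes_of_mem_ntDagChildren {p q : V × ℕ} (hp : p ∈ G.ntDagNodes v i k)
    (hq : q ∈ G.ntDagChildren v i k p) : q ∈ G.ntDagNodes v i k := by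
  obtain ⟨hi, hadj, hq2, hk⟩ := mem_ntDagChildren.mp hq
  have := hadj.diff_dist_adj (u := v)
  rw [mem_ntDagNodes] at hp ⊢
  omega

theorem sub_lt_sub_of_mem_ntDagChildren {p q : V × ℕ} (hq : q ∈ G.ntDagChildren v i k p) :
    i - q.2 < i - p.2 := by
  obtain ⟨hi, -, hq2, -⟩ := mem_ntDagChildren.mp hq
  omega

theorem length_ntDagChildren_le (p : V × ℕ) : (G.ntDagChildren v i k p).length ≤ G.degree p.1 := by
  unfold ntDagChildren
  split_ifs
  · simpa [← card_neighborFinset_eq_degree] using Finset.card_filter_le _ _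
  · simp

variable (G v i k)

theorem ntAux_eq_node_map_ntDagChildren (p : V × ℕ) :
    G.ntAux μ v k (i - p.2) p.2 p.1 =
      .node (μ p.1) ((G.ntDagChildren v i k p).map fun q => G.ntAux μ v k (i - q.2) q.2 q.1) := by
  obtain ⟨x, d⟩ := p
  unfold ntDagChildren
  dsimp only
  split_ifs with h
  · obtain ⟨j, hj⟩ : ∃ j, i - d = j + 1 := ⟨i - d - 1, by omega⟩
    rw [hj, ntAux, List.map_map]
    congr 2 with y
    simp only [Function.comp_apply, show i - (d + 1) = j by omega]
  · rw [show i - d = 0 by omega, ntAux, List.map_nil]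

noncomputable def ntDag : LDag X :=
  LDag.ofFinset (G.ntDagNodes v i k) (μ ∘ Prod.fst) (G.ntDagChildren v i k) (fun p => i - p.2)
    (fun _ hp _ hq => mem_ntDagNodes_of_mem_ntDagChildren hp hq)
    (fun _ _ _ hq => sub_lt_sub_of_mem_ntDagChildren hq)

theorem unfold_ntDag {a : V × ℕ} (ha : a ∈ G.ntDagNodes v i k) :
    (G.ntDag μ v i k).unfold ((G.ntDagNodes v i k).equivFin ⟨a, ha⟩) =
      G.ntAux μ v k (i - a.2) a.2 a.1 := by
  have h : (G.ntDag μ v i k).unfold ((G.ntDagNodes v i k).equivFin ⟨a, ha⟩) = _ :=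
    LDag.unfold_ofFinset _ _ _ _ _ _ _ (fun p _ => G.ntAux_eq_node_map_ntDagChildren μ v i k p) _
  rwa [Equiv.symm_apply_apply] at h

theorem ntDag_size_le : (G.ntDag μ v i k).size ≤ Fintype.card V * (k + 1) := by
  change (G.ntDagNodes v i k).card ≤ _
  simpa [mul_comm] using (G.ntDagNodes v i k).sum_fst_le_of_snd_mem_Icc _ k
    (fun _ hp => snd_mem_Icc_of_mem_ntDagNodes hp) fun _ => 1

theorem ntDag_edgeCount_le : (G.ntDag μ v i k).edgeCount ≤ 2 * G.edgeFinset.card * (k + 1) :=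
  calc (G.ntDag μ v i k).edgeCount
      = ∑ p ∈ G.ntDagNodes v i k, (G.ntDagChildren v i k p).length := LDag.edgeCount_ofFinset ..
    _ ≤ ∑ p ∈ G.ntDagNodes v i k, G.degree p.1 :=
      Finset.sum_le_sum fun p _ => length_ntDagChildren_le p
    _ ≤ (k + 1) * ∑ x, G.degree x :=
      (G.ntDagNodes v i k).sum_fst_le_of_snd_mem_Icc _ k
        (fun _ hp => snd_mem_Icc_of_mem_ntDagNodes hp) fun x => G.degree x
    _ = 2 * G.edgeFinset.card * (k + 1) := by rw [sum_degrees_eq_twice_card_edges]; ring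

end SimpleGraph

/-- For every graph `G` with `n` vertices and `m` edges, every
vertex `v` and all `i, k ≥ 0`, there is a DAG `D` with a distinguished node `r`
whose unfolding is isomorphic to the `k`-redundant neighborhood tree
`T_{i,k}^v`, with at most `n·(k+1)` nodes and at most `2m·(k+1)` edges. -/
theorem ntTree_dag_representation {V : Type u} {X : Type v} [Fintype V]
    (G : SimpleGraph V) (μ : V → X) (v : V) (i k : ℕ) :
    ∃ (D : LDag X) (r : Fin D.size),
      LTree.Iso (D.unfold r) (G.ntTree μ i k v) ∧
      D.size ≤ Fintype.card V * (k + 1) ∧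
      D.edgeCount ≤ 2 * G.edgeFinset.card * (k + 1) := by
  have hroot : (v, 0) ∈ G.ntDagNodes v i k := by simp [SimpleGraph.mem_ntDagNodes]
  refine ⟨G.ntDag μ v i k, (G.ntDagNodes v i k).equivFin ⟨(v, 0), hroot⟩, ?_,
    G.ntDag_size_le μ v i k, G.ntDag_edgeCount_le μ v i k⟩
  rw [G.unfold_ntDag μ v i k hroot]
  exact LTree.Iso.refl _
end

section
/- Let C_6 be the 6-cycle and let H = K_3 ⊔ K_3 be the disjoint union of two triangles, both with all vertices carrying the same label, and let u be any vertex of C_6 and v any vertex of H. Then for every height i the unfolding trees F_i^u and F_i^v are isomorphic, while for every k ≥ 0 and every height h ≥ k+2 the k-redundant neighborhood trees T_{h,k}^u and T_{h,k}^v are not isomorphic. Hence there exist vertices with identical unfolding trees of every height but different k-NTs (part 1 of the expressivity-incomparability theorem). -/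
open scoped Classical

universe u v

/-- The disjoint union of two triangles `K₃ ⊔ K₃`, realized on `Fin 3 ⊕ Fin 3`:
two distinct vertices are adjacent iff they lie on the same side. -/
noncomputable def twoTriangles : SimpleGraph (Fin 3 ⊕ Fin 3) :=
  SimpleGraph.fromRel (fun x y => x.isLeft = y.isLeft)

/-!
Both graphs are 2-regular, so with uniform labels all their unfolding trees of a given height
coincide. The `k`-NT keeps a node for the vertex `y` at depth `j` only if
`j ≤ dist r y + k`. In `K₃ ⊔ K₃` every distance is at most `1` (`SimpleGraph.dist` is `0`
between the two components), so no node survives at depth `k + 2`. In `C₆` the walk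
`x, x+1, x+2, x+3, x+2, x+3, …` reaches distance `2` after two steps and stays there, so it
survives the pruning down to depth `k + 2`. The number of nodes at a given depth is an
isomorphism invariant.
-/

namespace LTree

variable {L : Type u}

theorem countAt_zero_node [DecidableEq L] (x a : L) (ts : List (LTree L)) :
    countAt x 0 (node a ts) = if a = x then 1 else 0 := by
  simp [countAt]

theorem countAt_succ_node [DecidableEq L] (x : L) (d : ℕ) (a : L) (ts : List (LTree L)) :
    countAt x (d + 1) (node a ts) = (ts.map (countAt x d)).sum := by
  simp [countAt]

theorem Iso.node_of_forall (a : L) {ts us : List (LTree L)} (hlen : ts.length = us.length)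
    (h : ∀ t ∈ ts, ∀ s ∈ us, Iso t s) : Iso (LTree.node a ts) (LTree.node a us) :=
  .node a (List.forall₂_iff_zip.2 ⟨hlen, fun hmem =>
    h _ (List.of_mem_zip hmem).1 _ (List.of_mem_zip hmem).2⟩) (List.Perm.refl us)

theorem countAt_eq_of_iso [DecidableEq L] (x : L) (D : ℕ) :
    ∀ {t s : LTree L}, Iso t s → countAt x D t = countAt x D s := by
  induction D with
  | zero => rintro _ _ ⟨a, -, -⟩; rw [countAt_zero_node, countAt_zero_node]
  | succ D ih =>
    rintro _ _ (⟨a, hts, hperm⟩ : Iso _ _)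
    rw [countAt_succ_node, countAt_succ_node, ← (hperm.map _).sum_eq]
    congr 1
    rw [← List.forall₂_eq_eq_eq, List.forall₂_map_left_iff, List.forall₂_map_right_iff]
    exact hts.imp fun _ _ => ih

end LTree

namespace SimpleGraph

variable {V : Type u} {W X : Type v} [Fintype V]

theorem iso_unfoldingTree_of_isRegularOfDegree [Fintype W] {G : SimpleGraph V}
    {H : SimpleGraph W} {d : ℕ} (hG : G.IsRegularOfDegree d) (hH : H.IsRegularOfDegree d)
    (c : X) (i : ℕ) (v : V) (w : W) :
    LTree.Iso (G.unfoldingTree (fun _ => c) i v) (H.unfoldingTree (fun _ => c) i w) := by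
  induction i generalizing v w with
  | zero => exact .node c .nil (.refl [])
  | succ i ih =>
    refine LTree.Iso.node_of_forall c ?_ ?_
    · simpa using (hG v).trans (hH w).symm
    · simp only [List.mem_map, Finset.mem_toList]
      rintro _ ⟨v', -, rfl⟩ _ ⟨w', -, rfl⟩
      exact ih v' w'

variable (G : SimpleGraph V) (μ : V → X) (r : V) (k : ℕ)

theorem countAt_ntAux_eq_zero_of_dist_le [DecidableEq X] {m : ℕ} (hdist : ∀ y, G.dist r y ≤ m)
    (c : X) (i d D : ℕ) (x : V) (hD : 0 < D) (hdeep : m + k < d + D) :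
    LTree.countAt c D (G.ntAux μ r k i d x) = 0 := by
  induction i generalizing d D x with
  | zero =>
    obtain ⟨D, rfl⟩ := Nat.exists_eq_succ_of_ne_zero hD.ne'
    simp [ntAux, LTree.countAt_succ_node]
  | succ i ih =>
    obtain ⟨D, rfl⟩ := Nat.exists_eq_succ_of_ne_zero hD.ne'
    simp only [ntAux, LTree.countAt_succ_node, List.map_map, List.sum_eq_zero_iff,
      List.mem_map, Finset.mem_toList, Finset.mem_filter]
    rintro _ ⟨y, ⟨-, hy⟩, rfl⟩
    rcases D.eq_zero_or_pos with rfl | hD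
    · have := hdist y; omega
    · exact ih (d + 1) D y hD (by omega)

theorem countAt_ntAux_pos_of_chain [DecidableEq X] (i d D : ℕ) (f : ℕ → V)
    (hadj : ∀ j < D, G.Adj (f j) (f (j + 1)))
    (hdist : ∀ j < D, d + j + 1 ≤ G.dist r (f (j + 1)) + k) (hD : D ≤ i) :
    0 < LTree.countAt (μ (f D)) D (G.ntAux μ r k i d (f 0)) := by
  induction D generalizing i d f with
  | zero => cases i <;> simp [ntAux, LTree.countAt_zero_node]
  | succ D ih =>
    obtain ⟨i, rfl⟩ := Nat.exists_eq_succ_of_ne_zero (by omega : i ≠ 0)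
    have hchild : f 1 ∈ (G.neighborFinset (f 0)).filter (fun y => d + 1 ≤ G.dist r y + k) :=
      Finset.mem_filter.2 ⟨(G.mem_neighborFinset _ _).2 (hadj 0 D.succ_pos), hdist 0 D.succ_pos⟩
    have hpos := ih i (d + 1) (f ∘ Nat.succ) (fun j hj => hadj (j + 1) (by omega))
      (fun j hj => by simpa [Nat.add_assoc, Nat.add_comm 1] using hdist (j + 1) (by omega))
      (by omega)
    rw [ntAux, LTree.countAt_succ_node, List.map_map]
    exact hpos.trans_le (List.le_sum_of_mem (List.mem_map_of_mem (Finset.mem_toList.2 hchild)))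

end SimpleGraph

theorem twoTriangles_adj {x y : Fin 3 ⊕ Fin 3} :
    twoTriangles.Adj x y ↔ x ≠ y ∧ x.isLeft = y.isLeft := by
  simp [twoTriangles, eq_comm (a := y.isLeft)]

theorem twoTriangles_isRegularOfDegree : twoTriangles.IsRegularOfDegree 2 := by
  intro w
  simp only [SimpleGraph.degree, SimpleGraph.neighborFinset_eq_filter, twoTriangles_adj]
  fin_cases w <;> decide

theorem isLeft_eq_of_twoTriangles_reachable {x y : Fin 3 ⊕ Fin 3}
    (h : twoTriangles.Reachable x y) : x.isLeft = y.isLeft := by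
  obtain ⟨p⟩ := h
  induction p with
  | nil => rfl
  | cons hadj _ ih => exact (twoTriangles_adj.1 hadj).2.trans ih

theorem twoTriangles_dist_le_one (x y : Fin 3 ⊕ Fin 3) : twoTriangles.dist x y ≤ 1 := by
  by_cases hreach : twoTriangles.Reachable x y
  · rcases eq_or_ne x y with rfl | hne
    · simp
    · exact (SimpleGraph.dist_eq_one_iff_adj.2
        (twoTriangles_adj.2 ⟨hne, isLeft_eq_of_twoTriangles_reachable hreach⟩)).le
  · simp [SimpleGraph.dist_eq_zero_of_not_reachable hreach]

theorem cycleGraph_six_two_le_dist (x : Fin 6) {y : Fin 6} (hy : y = x + 2 ∨ y = x + 3) :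
    2 ≤ (SimpleGraph.cycleGraph 6).dist x y :=
  (SimpleGraph.cycleGraph_preconnected x y).one_lt_dist_of_ne_of_not_adj
    (by rcases hy with rfl | rfl <;> revert x <;> decide)
    (by rcases hy with rfl | rfl <;> revert x <;> decide)

theorem cycleGraph_six_countAt_ntTree_pos (x : Fin 6) (k h : ℕ) (hkh : k + 2 ≤ h) :
    0 < LTree.countAt () (k + 2) ((SimpleGraph.cycleGraph 6).ntTree (fun _ => ()) h k x) := by
  obtain ⟨f, hf0, hadj, hdist⟩ : ∃ f : ℕ → Fin 6, f 0 = x ∧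
      (∀ j, (SimpleGraph.cycleGraph 6).Adj (f j) (f (j + 1))) ∧
      ∀ j, min (j + 1) 2 ≤ (SimpleGraph.cycleGraph 6).dist x (f (j + 1)) := by
    refine ⟨fun | 0 => x | 1 => x + 1 | j + 2 => if j % 2 = 0 then x + 2 else x + 3,
      rfl, fun j => ?_, fun j => ?_⟩
    · rcases j with _ | _ | j
      · revert x; decide
      · revert x; decide
      · dsimp only
        split_ifs <;> first | omega | (revert x; decide)
    · rcases j with _ | j
      · exact (min_le_left _ _).trans (SimpleGraph.dist_eq_one_iff_adj.2 (by revert x; decide)).ge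
      · refine (min_le_right _ _).trans (cycleGraph_six_two_le_dist x ?_)
        dsimp only
        split_ifs <;> simp
  subst hf0
  exact SimpleGraph.countAt_ntAux_pos_of_chain _ (fun _ => ()) (f 0) k h 0 (k + 2) f
    (fun j _ => hadj j) (fun j _ => by have := hdist j; omega) hkh

/-- For any vertex `u` of the 6-cycle `C₆` and any vertex `v`
of `K₃ ⊔ K₃` (everything uniformly labeled), the unfolding trees `F_i^u` and
`F_i^v` are isomorphic for every height `i`, while for every `k ≥ 0` and every
height `h ≥ k + 2` the `k`-redundant neighborhood trees `T_{h,k}^u` and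
`T_{h,k}^v` are not isomorphic. -/
theorem hexagon_vs_twoTriangles (u : Fin 6) (v : Fin 3 ⊕ Fin 3) :
    (∀ i : ℕ,
      LTree.Iso ((SimpleGraph.cycleGraph 6).unfoldingTree (fun _ => ()) i u)
        (twoTriangles.unfoldingTree (fun _ => ()) i v)) ∧
    (∀ k h : ℕ, k + 2 ≤ h →
      ¬ LTree.Iso ((SimpleGraph.cycleGraph 6).ntTree (fun _ => ()) h k u)
        (twoTriangles.ntTree (fun _ => ()) h k v)) := by
  -- `convert` identifies the computable `Fintype` instance of the neighbour sets of
  -- `cycleGraph` with the classical one that `unfoldingTree` was elaborated with.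
  refine ⟨fun i => SimpleGraph.iso_unfoldingTree_of_isRegularOfDegree
    (fun _ => by convert SimpleGraph.cycleGraph_degree_three_le) twoTriangles_isRegularOfDegree
    () i u v, fun k h hkh hiso => ?_⟩
  have hpos := cycleGraph_six_countAt_ntTree_pos u k h hkh
  have hzero : LTree.countAt () (k + 2) (twoTriangles.ntTree (fun _ => ()) h k v) = 0 :=
    twoTriangles.countAt_ntAux_eq_zero_of_dist_le _ v k (twoTriangles_dist_le_one v) () h 0
      (k + 2) v (by omega) (by omega)
  rw [LTree.countAt_eq_of_iso () (k + 2) hiso, hzero] at hpos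
  exact hpos.false
end

section
/- Let u, v be vertices of a connected graph G with shortest-path distance d_G(u,v) = k. Then every node of the unfolding tree F_k^u representing v has depth exactly k and is contained in the 0-redundant neighborhood tree T_{k,0}^u; consequently the number of nodes representing v is the same in F_k^u, in T_{k,1}^u, and in T_{k,0}^u, and equals the number of shortest paths from u to v. -/
open scoped Classical

universe u v

/-!
A node of `F_i^x` at depth `d ≤ i` representing `v` is the endpoint of a walk of length `d` from
`x` to `v`, so these nodes are counted by `(A ^ d) x v` for the adjacency matrix `A`; walks of
length `dist u v` are exactly the shortest paths. Pruning never removes an ancestor of a node at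
depth `dist u v` representing `v`: an ancestor at depth `d + 1` representing `y` has
`dist y v ≤ dist u v - (d + 1)`, so the triangle inequality gives `d + 1 ≤ dist u y`, and the
pruning condition `d + 1 ≤ dist u y + k` holds for every `k`.
-/

namespace LTree

variable {L : Type u} [DecidableEq L]

lemma countAt_zero (x : L) (t : LTree L) : countAt x 0 t = if t.label = x then 1 else 0 := by
  cases t
  rw [countAt, label]

lemma countAt_node_succ (x a : L) (d : ℕ) (ts : List (LTree L)) :
    countAt x (d + 1) (node a ts) = (ts.map (countAt x d)).sum := by
  rw [countAt, List.attach_map_val (f := countAt x d)]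

end LTree

namespace SimpleGraph

variable {V : Type u} {X : Type v} [Fintype V] (G : SimpleGraph V)

@[simp]
lemma label_unfoldingTree (μ : V → X) (i : ℕ) (x : V) : (G.unfoldingTree μ i x).label = μ x := by
  cases i <;> rfl

@[simp]
lemma label_ntAux (μ : V → X) (r : V) (k i d : ℕ) (x : V) :
    (G.ntAux μ r k i d x).label = μ x := by
  cases i <;> rfl

variable [DecidableEq V]

lemma countAt_unfoldingTree_succ_succ (v x : V) (i d : ℕ) :
    (G.unfoldingTree id (i + 1) x).countAt v (d + 1)
      = ∑ y ∈ G.neighborFinset x, (G.unfoldingTree id i y).countAt v d := by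
  rw [unfoldingTree, LTree.countAt_node_succ, List.map_map, Finset.sum_map_toList]
  rfl

lemma countAt_ntAux_succ_succ (r v x : V) (k i d j : ℕ) :
    (G.ntAux id r k (i + 1) d x).countAt v (j + 1)
      = ∑ y ∈ (G.neighborFinset x).filter (fun y => d + 1 ≤ G.dist r y + k),
          (G.ntAux id r k i (d + 1) y).countAt v j := by
  rw [ntAux, LTree.countAt_node_succ, List.map_map, Finset.sum_map_toList]
  rfl

lemma countAt_unfoldingTree (v x : V) (i d : ℕ) :
    (G.unfoldingTree id i x).countAt v d = if d ≤ i then (G.adjMatrix ℕ ^ d) x v else 0 := by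
  induction i generalizing d x with
  | zero =>
    cases d with
    | zero => simp [LTree.countAt_zero, Matrix.one_apply]
    | succ d => simp [unfoldingTree, LTree.countAt_node_succ]
  | succ i ih =>
    cases d with
    | zero => simp [LTree.countAt_zero, Matrix.one_apply]
    | succ d =>
      rw [countAt_unfoldingTree_succ_succ, pow_succ', Matrix.mul_apply, neighborFinset_eq_filter,
        Finset.sum_filter]
      simp only [ih, Nat.add_le_add_iff_right]
      split_ifs <;> simp [adjMatrix_apply]

lemma exists_walk_of_countAt_unfoldingTree_ne_zero {v x : V} {i d : ℕ}
    (h : (G.unfoldingTree id i x).countAt v d ≠ 0) : d ≤ i ∧ ∃ p : G.Walk x v, p.length = d := by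
  rw [countAt_unfoldingTree] at h
  split_ifs at h with hdi
  · rw [adjMatrix_pow_apply_eq_card_walk, Nat.cast_id] at h
    obtain ⟨⟨p, hp⟩⟩ := Fintype.card_pos_iff.mp (Nat.pos_of_ne_zero h)
    exact ⟨hdi, p, hp⟩
  · exact absurd rfl h

lemma countAt_ntAux_eq_countAt_unfoldingTree {r v : V} (k : ℕ) {i j d : ℕ} (x : V)
    (hdj : d + j = G.dist r v) :
    (G.ntAux id r k i d x).countAt v j = (G.unfoldingTree id i x).countAt v j := by
  induction i generalizing j d x with
  | zero => rfl
  | succ i ih =>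
    cases j with
    | zero => simp only [LTree.countAt_zero, label_ntAux, label_unfoldingTree]
    | succ j =>
      rw [countAt_ntAux_succ_succ, countAt_unfoldingTree_succ_succ,
        Finset.sum_congr rfl fun y _ => ih y (by omega)]
      refine Finset.sum_filter_of_ne fun y _ hne => ?_
      obtain ⟨-, p, rfl⟩ := G.exists_walk_of_countAt_unfoldingTree_ne_zero hne
      have htriangle := p.reachable.dist_triangle_right r
      have hyv := G.dist_le p
      omega

lemma countAt_ntTree_dist (u v : V) (i k : ℕ) :
    (G.ntTree id i k u).countAt v (G.dist u v) = (G.unfoldingTree id i u).countAt v (G.dist u v) :=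
  G.countAt_ntAux_eq_countAt_unfoldingTree k u (zero_add _)

lemma natCard_path_length_dist (u v : V) :
    Nat.card {p : G.Walk u v // p.length = G.dist u v ∧ p.IsPath}
      = Fintype.card {p : G.Walk u v | p.length = G.dist u v} := by
  rw [← Nat.card_eq_fintype_card]
  exact Nat.card_congr <| Equiv.subtypeEquivRight fun p =>
    ⟨And.left, fun h => ⟨h, p.isPath_of_length_eq_dist h⟩⟩

end SimpleGraph

theorem count_eq_shortest_paths_at_dist_general {V : Type u} [Fintype V] [DecidableEq V]
    (G : SimpleGraph V) (u v : V) (k : ℕ)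
    (hd : G.dist u v = k) :
    (∀ d : ℕ, LTree.countAt v d (G.unfoldingTree id k u) ≠ 0 → d = k) ∧
    LTree.countAt v k (G.ntTree id k 0 u) = LTree.countAt v k (G.unfoldingTree id k u) ∧
    LTree.countAt v k (G.ntTree id k 1 u) = LTree.countAt v k (G.unfoldingTree id k u) ∧
    LTree.countAt v k (G.unfoldingTree id k u)
        = Nat.card {p : G.Walk u v // p.length = k ∧ p.IsPath} := by
  subst hd
  refine ⟨fun d hne => ?_, G.countAt_ntTree_dist u v _ 0, G.countAt_ntTree_dist u v _ 1, ?_⟩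
  · obtain ⟨hdk, p, rfl⟩ := G.exists_walk_of_countAt_unfoldingTree_ne_zero hne
    exact le_antisymm hdk (G.dist_le p)
  · rw [G.countAt_unfoldingTree, if_pos le_rfl, G.adjMatrix_pow_apply_eq_card_walk, Nat.cast_id,
      G.natCard_path_length_dist]

/-- Let `u, v` be vertices of a connected graph at
shortest-path distance `k`.  Then every node of `F_k^u` representing `v` has
depth exactly `k`, and the number of nodes representing `v` is the same in
`F_k^u`, in `T_{k,1}^u` and in `T_{k,0}^u`, and equals the number of shortest
paths from `u` to `v`.  (Vertex labels `id`, so labels are represented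
vertices.) -/
theorem count_eq_shortest_paths_at_dist {V : Type u} [Fintype V] [DecidableEq V]
    (G : SimpleGraph V) (hG : G.Connected) (u v : V) (k : ℕ)
    (hd : G.dist u v = k) :
    (∀ d : ℕ, LTree.countAt v d (G.unfoldingTree id k u) ≠ 0 → d = k) ∧
    LTree.countAt v k (G.ntTree id k 0 u) = LTree.countAt v k (G.unfoldingTree id k u) ∧
    LTree.countAt v k (G.ntTree id k 1 u) = LTree.countAt v k (G.unfoldingTree id k u) ∧
    LTree.countAt v k (G.unfoldingTree id k u)
        = Nat.card {p : G.Walk u v // p.length = k ∧ p.IsPath} :=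
  count_eq_shortest_paths_at_dist_general G u v k hd
end

section
/- Let u, v be vertices of a connected graph G with shortest-path distance d_G(u,v) = k, and for a rooted tree X with nodes mapped to graph vertices by φ define the relative influence I_X(v,u) = |{n ∈ V(X) : φ(n)=v}| / |V(X)|. Then I_{F_k^u}(v,u) ≤ I_{T_{k,1}^u}(v,u) ≤ I_{T_{k,0}^u}(v,u); i.e., the relative influence of v on u under 0- and 1-redundant neighborhood trees is at least as large as under the full unfolding tree, so neighborhood trees are less susceptible to oversquashing. -/
open scoped Classical

universe u v

/-- The relative influence of the (graph) vertex `x` on the root of the tree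
`t`: the number of nodes representing `x` divided by the total number of
nodes. -/
noncomputable def relInfluence {V : Type u} [DecidableEq V] (t : LTree V) (x : V) : ℚ :=
  (LTree.countLabel x t : ℚ) / (t.size : ℚ)


section Proof

namespace LTree

variable {L : Type u}

lemma size_node (a : L) (ts : List (LTree L)) :
    size (node a ts) = 1 + (ts.map size).sum := by
  rw [size]; simp

lemma countLabel_node [DecidableEq L] (x a : L) (ts : List (LTree L)) :
    countLabel x (node a ts)
      = (if a = x then 1 else 0) + (ts.map (countLabel x)).sum := by
  rw [countLabel]; simp

lemma one_le_size (t : LTree L) : 1 ≤ size t := by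
  cases t with
  | node a ts => rw [size_node]; omega

end LTree

open LTree

variable {V : Type u}

lemma unfolding_node (G : SimpleGraph V) [Fintype V] (i : ℕ) (x : V) :
    G.unfoldingTree (id : V → V) (i+1) x
      = .node x (((G.neighborFinset x).toList.map (G.unfoldingTree id i))) := rfl

lemma ntAux_node (G : SimpleGraph V) [Fintype V] (r : V) (k i d : ℕ) (x : V) :
    G.ntAux (id : V → V) r k (i+1) d x
      = .node x ((((G.neighborFinset x).filter
            (fun y => d + 1 ≤ G.dist r y + k)).toList.map
            (G.ntAux id r k i (d+1)))) := rfl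

lemma dist_adj_le (G : SimpleGraph V) (hG : G.Connected) {u y z : V} (h : G.Adj y z) :
    G.dist u z ≤ G.dist u y + 1 := by
  have h1 : G.dist y z = 1 := SimpleGraph.dist_eq_one_iff_adj.2 h
  have := hG.dist_triangle (u := u) (v := y) (w := z)
  omega


lemma sum_list_map (s : Finset V) (f : V → LTree V) (g : LTree V → ℕ) :
    ((s.toList.map f).map g).sum = ∑ y ∈ s, g (f y) := by
  rw [List.map_map, Finset.sum_map_toList]
  rfl

/-- Size of the unfolding tree. -/
lemma size_ntAux_le_unfolding (G : SimpleGraph V) [Fintype V] (r : V) (k : ℕ) :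
    ∀ (i d : ℕ) (x : V),
      size (G.ntAux (id : V → V) r k i d x) ≤ size (G.unfoldingTree id i x) := by
  intro i
  induction i with
  | zero => intro d x; rw [SimpleGraph.ntAux, SimpleGraph.unfoldingTree]
  | succ i ih =>
      intro d x
      rw [ntAux_node, unfolding_node, size_node, size_node]
      have h1 : ((((G.neighborFinset x).filter
            (fun y => d + 1 ≤ G.dist r y + k)).toList.map
            (G.ntAux id r k i (d+1))).map size).sum
          ≤ (((G.neighborFinset x).toList.map (G.unfoldingTree id i)).map size).sum := by
        rw [sum_list_map, sum_list_map]
        calc (∑ y ∈ (G.neighborFinset x).filter (fun y => d + 1 ≤ G.dist r y + k),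
                size (G.ntAux id r k i (d+1) y))
            ≤ ∑ y ∈ (G.neighborFinset x).filter (fun y => d + 1 ≤ G.dist r y + k),
                size (G.unfoldingTree id i y) := Finset.sum_le_sum (fun y _ => ih (d+1) y)
          _ ≤ ∑ y ∈ G.neighborFinset x, size (G.unfoldingTree id i y) :=
              Finset.sum_le_sum_of_subset (Finset.filter_subset _ _)
      omega

lemma size_ntAux_mono (G : SimpleGraph V) [Fintype V] (r : V) {k k' : ℕ} (hk : k ≤ k') :
    ∀ (i d : ℕ) (x : V),
      size (G.ntAux (id : V → V) r k i d x) ≤ size (G.ntAux id r k' i d x) := by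
  intro i
  induction i with
  | zero => intro d x; rw [SimpleGraph.ntAux, SimpleGraph.ntAux]
  | succ i ih =>
      intro d x
      rw [ntAux_node, ntAux_node, size_node, size_node]
      have hsub : (G.neighborFinset x).filter (fun y => d + 1 ≤ G.dist r y + k)
          ⊆ (G.neighborFinset x).filter (fun y => d + 1 ≤ G.dist r y + k') := by
        intro y hy
        simp only [Finset.mem_filter] at hy ⊢
        exact ⟨hy.1, by omega⟩
      have h1 : ((((G.neighborFinset x).filter
            (fun y => d + 1 ≤ G.dist r y + k)).toList.map
            (G.ntAux id r k i (d+1))).map size).sum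
          ≤ ((((G.neighborFinset x).filter
            (fun y => d + 1 ≤ G.dist r y + k')).toList.map
            (G.ntAux id r k' i (d+1))).map size).sum := by
        rw [sum_list_map, sum_list_map]
        calc (∑ y ∈ (G.neighborFinset x).filter (fun y => d + 1 ≤ G.dist r y + k),
                size (G.ntAux id r k i (d+1) y))
            ≤ ∑ y ∈ (G.neighborFinset x).filter (fun y => d + 1 ≤ G.dist r y + k),
                size (G.ntAux id r k' i (d+1) y) :=
              Finset.sum_le_sum (fun y _ => ih (d+1) y)
          _ ≤ ∑ y ∈ (G.neighborFinset x).filter (fun y => d + 1 ≤ G.dist r y + k'),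
                size (G.ntAux id r k' i (d+1) y) := Finset.sum_le_sum_of_subset hsub
      omega

/-- If `y` is too far from `v`, no node of the unfolding tree of height `i`
rooted at `y` is labeled `v`. -/
lemma countLabel_unfolding_zero [DecidableEq V] (G : SimpleGraph V) [Fintype V]
    (hG : G.Connected) (u v : V) :
    ∀ (i : ℕ) (y : V), G.dist u y + i < G.dist u v →
      countLabel v (G.unfoldingTree (id : V → V) i y) = 0 := by
  intro i
  induction i with
  | zero =>
      intro y hy
      rw [SimpleGraph.unfoldingTree, countLabel_node]
      have : y ≠ v := by rintro rfl; omega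
      simp [this]
  | succ i ih =>
      intro y hy
      rw [unfolding_node, countLabel_node]
      have hyv : y ≠ v := by
        rintro rfl; omega
      have : (((G.neighborFinset y).toList.map (G.unfoldingTree id i)).map
          (countLabel v)).sum = 0 := by
        rw [sum_list_map]
        apply Finset.sum_eq_zero
        intro z hz
        have hadj : G.Adj y z := by
          rwa [SimpleGraph.mem_neighborFinset] at hz
        exact ih z (by have := dist_adj_le G hG (u := u) hadj; omega)
      rw [this, if_neg hyv]

/-- At the critical depth the pruning removes no node labeled `v`. -/
lemma countLabel_ntAux_eq [DecidableEq V] (G : SimpleGraph V) [Fintype V]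
    (hG : G.Connected) (u v : V) (k : ℕ) :
    ∀ (i d : ℕ) (x : V), d + i = G.dist u v →
      countLabel v (G.ntAux (id : V → V) u k i d x)
        = countLabel v (G.unfoldingTree id i x) := by
  intro i
  induction i with
  | zero => intro d x _; rw [SimpleGraph.ntAux, SimpleGraph.unfoldingTree]
  | succ i ih =>
      intro d x hdi
      rw [ntAux_node, unfolding_node, countLabel_node, countLabel_node]
      congr 1
      rw [sum_list_map, sum_list_map]
      rw [← Finset.sum_filter_add_sum_filter_not (G.neighborFinset x)
        (fun y => d + 1 ≤ G.dist u y + k) (fun y => countLabel v (G.unfoldingTree id i y))]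
      have h2 : ∑ y ∈ (G.neighborFinset x).filter
            (fun y => ¬ (d + 1 ≤ G.dist u y + k)),
            countLabel v (G.unfoldingTree id i y) = 0 := by
        apply Finset.sum_eq_zero
        intro y hy
        rw [Finset.mem_filter] at hy
        exact countLabel_unfolding_zero G hG u v i y (by omega)
      rw [h2, add_zero]
      exact Finset.sum_congr rfl (fun y _ => ih (d+1) y (by omega))

end Proof

/-- Let `u, v` be vertices of a connected graph at
shortest-path distance `k`, and for a rooted tree `X` whose nodes represent
graph vertices let `I_X(v) = |{n : φ(n) = v}| / |V(X)|` be the relative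
influence of `v`.  Then
`I_{F_k^u}(v) ≤ I_{T_{k,1}^u}(v) ≤ I_{T_{k,0}^u}(v)`: the relative influence
under 0- and 1-redundant neighborhood trees is at least as large as under the
full unfolding tree. -/
theorem relInfluence_mono {V : Type u} [Fintype V] [DecidableEq V]
    (G : SimpleGraph V) (hG : G.Connected) (u v : V) (k : ℕ)
    (hd : G.dist u v = k) :
    relInfluence (G.unfoldingTree id k u) v ≤ relInfluence (G.ntTree id k 1 u) v ∧
    relInfluence (G.ntTree id k 1 u) v ≤ relInfluence (G.ntTree id k 0 u) v := by
  subst hd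
  set k' := G.dist u v with hk'
  have hc1 : LTree.countLabel v (G.ntTree (id : V → V) k' 1 u)
      = LTree.countLabel v (G.unfoldingTree id k' u) :=
    countLabel_ntAux_eq G hG u v 1 k' 0 u (by omega)
  have hc0 : LTree.countLabel v (G.ntTree (id : V → V) k' 0 u)
      = LTree.countLabel v (G.unfoldingTree id k' u) :=
    countLabel_ntAux_eq G hG u v 0 k' 0 u (by omega)
  have hs1 : LTree.size (G.ntTree (id : V → V) k' 1 u)
      ≤ LTree.size (G.unfoldingTree id k' u) :=
    size_ntAux_le_unfolding G u 1 k' 0 u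
  have hs0 : LTree.size (G.ntTree (id : V → V) k' 0 u)
      ≤ LTree.size (G.ntTree id k' 1 u) :=
    size_ntAux_mono G u (by omega) k' 0 u
  have hp0 : (0 : ℚ) < LTree.size (G.ntTree (id : V → V) k' 0 u) := by
    exact_mod_cast Nat.lt_of_lt_of_le Nat.zero_lt_one (LTree.one_le_size _)
  have hp1 : (0 : ℚ) < LTree.size (G.ntTree (id : V → V) k' 1 u) := by
    exact_mod_cast Nat.lt_of_lt_of_le Nat.zero_lt_one (LTree.one_le_size _)
  have hnn : (0 : ℚ) ≤ LTree.countLabel v (G.unfoldingTree (id : V → V) k' u) := by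
    exact_mod_cast Nat.zero_le _
  constructor
  · rw [relInfluence, relInfluence, hc1]
    exact div_le_div_of_nonneg_left hnn hp1 (by exact_mod_cast hs1)
  · rw [relInfluence, relInfluence, hc1, hc0]
    exact div_le_div_of_nonneg_left hnn hp0 (by exact_mod_cast hs0)
end
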